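/- Let σ ∈ ℝ be fixed. Let (r_j) be a sequence of reals tending to +∞, let (ω_j) be positive reals with ω_j · log(r_j) / log(log(r_j)) → 0, and let (r'_j), (r''_j) be sequences of reals satisfying |r'_j − r_j| < ω_j and |r''_j − r_j| < ω_j for all j. Then Γ(σ + i r'_j) / Γ(σ + i r''_j) − exp(i (r'_j − r''_j) · log r_j) → 0 as j → ∞. -/

import Mathlib

open Complex Filter Topology Finset

/-!
Put `s = σ + i r''_j` and `h = i (r'_j - r''_j)`. By Euler's limit `Γ = lim GammaSeq`,
`Γ(s + h) / Γ(s) · exp (-h log s)` is the limit of `exp E_n`, where `E_n` is, up to the vanishing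
term `h (log n - log (n + s + 1))`, the sum over `k ≤ n` of the errors made in replacing
`log (s + k + h) - log (s + k)` by `h (log (s + k + 1) - log (s + k))`. Comparing the integrals of
`1 / w` along the two segments, the `k`-th error is `O(|h| / |s + k|²)`, so for `s` high in the
upper half-plane `Γ(s + h) / Γ(s) = exp (h log s) (1 + O(|h|))` uniformly. Finally
`h log s = h log r_j + h log (s / r_j)` with `s / r_j → i`, the factor `exp (h log r_j)` has modulus
one, and `h → 0` because `ω_j → 0`.
-/

lemma log_add_sub_log_eq_integral {z h : ℂ}
    (hslit : ∀ τ ∈ Set.Icc (0 : ℝ) 1, z + τ * h ∈ slitPlane) :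
    log (z + h) - log z = ∫ τ in (0 : ℝ)..1, h / (z + τ * h) := by
  rw [← Set.uIcc_of_le zero_le_one] at hslit
  have hderiv : ∀ τ ∈ Set.uIcc (0 : ℝ) 1,
      HasDerivAt (fun τ : ℝ => log (z + τ * h)) (h / (z + τ * h)) τ := by
    intro τ hτ
    have hlin : HasDerivAt (fun w : ℂ => z + w * h) h τ := by
      simpa using ((hasDerivAt_id (τ : ℂ)).mul_const h).const_add z
    exact (hlin.clog (hslit τ hτ)).comp_ofReal
  have hcont : ContinuousOn (fun τ : ℝ => h / (z + τ * h)) (Set.uIcc 0 1) :=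
    continuousOn_const.div (by fun_prop) fun τ hτ => slitPlane_ne_zero (hslit τ hτ)
  rw [intervalIntegral.integral_eq_sub_of_hasDerivAt hderiv hcont.intervalIntegrable]
  simp

noncomputable def logSecantError (z h : ℂ) : ℂ :=
  h * (log (z + 1) - log z) - (log (z + h) - log z)

lemma norm_logSecantError_le {z h : ℂ} {ρ : ℝ} (hρ : 0 < ρ)
    (hslit : ∀ τ ∈ Set.Icc (0 : ℝ) 1, z + τ * h ∈ slitPlane ∧ z + τ ∈ slitPlane)
    (hnorm : ∀ τ ∈ Set.Icc (0 : ℝ) 1, ρ ≤ ‖z + τ * h‖ * ‖z + τ‖) :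
    ‖logSecantError z h‖ ≤ ‖h‖ * ‖h - 1‖ / ρ := by
  have hint : ∀ w : ℂ, (∀ τ ∈ Set.Icc (0 : ℝ) 1, z + τ * w ∈ slitPlane) →
      IntervalIntegrable (fun τ : ℝ => h / (z + τ * w)) MeasureTheory.volume 0 1 := by
    intro w hw
    refine ContinuousOn.intervalIntegrable ?_
    rw [Set.uIcc_of_le zero_le_one]
    exact continuousOn_const.div (by fun_prop) fun τ hτ => slitPlane_ne_zero (hw τ hτ)
  have hslit₁ : ∀ τ ∈ Set.Icc (0 : ℝ) 1, z + τ * 1 ∈ slitPlane := by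
    simpa using fun τ hτ => (hslit τ hτ).2
  have hslitₕ : ∀ τ ∈ Set.Icc (0 : ℝ) 1, z + τ * h ∈ slitPlane := fun τ hτ => (hslit τ hτ).1
  rw [logSecantError, log_add_sub_log_eq_integral hslit₁, log_add_sub_log_eq_integral hslitₕ,
    ← intervalIntegral.integral_const_mul,
    ← intervalIntegral.integral_sub (by simpa [div_eq_mul_inv] using hint 1 hslit₁) (hint h hslitₕ)]
  refine (intervalIntegral.norm_integral_le_of_norm_le_const (C := ‖h‖ * ‖h - 1‖ / ρ)
    fun τ hτ => ?_).trans_eq (by simp)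
  rw [Set.uIoc_of_le zero_le_one] at hτ
  have hτ' : τ ∈ Set.Icc (0 : ℝ) 1 := ⟨hτ.1.le, hτ.2⟩
  have hdiff : h * (1 / (z + τ * 1)) - h / (z + τ * h) =
      h * (τ * (h - 1)) / ((z + τ * h) * (z + τ)) := by
    rw [mul_one, mul_one_div, div_sub_div _ _ (slitPlane_ne_zero (hslit τ hτ').2)
      (slitPlane_ne_zero (hslit τ hτ').1)]
    ring
  have hτ1 : ‖(τ : ℂ)‖ ≤ 1 := by
    rw [norm_real, Real.norm_of_nonneg hτ'.1]
    exact hτ'.2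
  rw [hdiff, norm_div, norm_mul, norm_mul, norm_mul]
  calc ‖h‖ * (‖(τ : ℂ)‖ * ‖h - 1‖) / (‖z + τ * h‖ * ‖z + τ‖)
      ≤ ‖h‖ * (1 * ‖h - 1‖) / ρ := by gcongr; exact hnorm τ hτ'
    _ = ‖h‖ * ‖h - 1‖ / ρ := by ring

lemma re_add_im_le_two_mul_norm (z : ℂ) : z.re + z.im ≤ 2 * ‖z‖ := by
  linarith [re_le_norm z, im_le_norm z]

lemma norm_logSecantError_le_of_norm_lt_im {z h : ℂ} (hh : ‖h‖ ≤ 1 / 2) (him : ‖h‖ < z.im)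
    (hre : 1 < z.re + z.im) :
    ‖logSecantError z h‖ ≤ 4 * ‖h‖ * ‖h - 1‖ / (z.re + z.im - 1) ^ 2 := by
  have hsmall : ∀ τ ∈ Set.Icc (0 : ℝ) 1, |(τ * h).re| ≤ ‖h‖ ∧ |(τ * h).im| ≤ ‖h‖ := by
    intro τ hτ
    simp only [re_ofReal_mul, im_ofReal_mul, abs_mul, abs_of_nonneg hτ.1]
    exact ⟨(mul_le_of_le_one_left (abs_nonneg _) hτ.2).trans (abs_re_le_norm h),
      (mul_le_of_le_one_left (abs_nonneg _) hτ.2).trans (abs_im_le_norm h)⟩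
  have hρ : 0 < (z.re + z.im - 1) ^ 2 / 4 := by
    have : 0 < z.re + z.im - 1 := by linarith
    positivity
  refine (norm_logSecantError_le hρ (fun τ hτ => ?_) fun τ hτ => ?_).trans_eq (by field_simp)
  · obtain ⟨-, him_small⟩ := hsmall τ hτ
    refine ⟨mem_slitPlane_iff.2 (Or.inr ?_), mem_slitPlane_iff.2 (Or.inr ?_)⟩
    · simp only [add_im]
      linarith [neg_abs_le (τ * h).im]
    · simp only [add_im, ofReal_im]
      linarith [norm_nonneg h]
  · obtain ⟨hre_small, him_small⟩ := hsmall τ hτ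
    have h₁ : z.re + z.im - 1 ≤ 2 * ‖z + τ * h‖ := by
      have := re_add_im_le_two_mul_norm (z + τ * h)
      simp only [add_re, add_im] at this
      linarith [neg_abs_le (τ * h).re, neg_abs_le (τ * h).im]
    have h₂ : z.re + z.im - 1 ≤ 2 * ‖z + τ‖ := by
      have := re_add_im_le_two_mul_norm (z + τ)
      simp only [add_re, add_im, ofReal_re, ofReal_im] at this
      linarith [hτ.1]
    have h₀ : 0 ≤ z.re + z.im - 1 := by linarith
    nlinarith [mul_le_mul h₁ h₂ h₀ (by positivity)]

lemma sum_range_inv_add_sq_le {c : ℝ} (hc : 1 < c) (n : ℕ) :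
    ∑ k ∈ range n, 1 / ((k : ℝ) + c) ^ 2 ≤ 1 / (c - 1) := by
  suffices ∑ k ∈ range n, 1 / ((k : ℝ) + c) ^ 2 ≤ 1 / (c - 1) - 1 / (n + c - 1) by
    have : 0 ≤ 1 / ((n : ℝ) + c - 1) := one_div_nonneg.2 (by linarith [n.cast_nonneg (α := ℝ)])
    linarith
  induction n with
  | zero => simp
  | succ n ih =>
    have hpos : 0 < (n : ℝ) + c - 1 := by linarith [n.cast_nonneg (α := ℝ)]
    have hstep : 1 / ((n : ℝ) + c) ^ 2 ≤ 1 / ((n : ℝ) + c - 1) - 1 / (n + c) := by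
      rw [div_sub_div _ _ hpos.ne' (by linarith), div_le_div_iff₀ (by positivity) (by positivity)]
      nlinarith
    rw [sum_range_succ, Nat.cast_succ, show (n : ℝ) + 1 + c - 1 = n + c by ring]
    linarith

lemma norm_sum_logSecantError_le {s h : ℂ} (hh : ‖h‖ ≤ 1 / 2) (him : ‖h‖ < s.im)
    (hre : 8 ≤ s.re + s.im) (n : ℕ) :
    ‖∑ k ∈ range n, logSecantError (s + k) h‖ ≤ ‖h‖ := by
  set c := s.re + s.im - 1
  have hh1 : ‖h - 1‖ ≤ 3 / 2 := by linarith [norm_sub_le h 1, norm_one (α := ℂ)]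
  calc ‖∑ k ∈ range n, logSecantError (s + k) h‖
      ≤ ∑ k ∈ range n, 4 * ‖h‖ * ‖h - 1‖ * (1 / ((k : ℝ) + c) ^ 2) := by
        refine norm_sum_le_of_le _ fun k _ => ?_
        have hc : (s + k).re + (s + k).im - 1 = k + c := by
          simp only [c, add_re, add_im, natCast_re, natCast_im, add_zero]
          ring
        have hk := norm_logSecantError_le_of_norm_lt_im (z := s + k) hh (by simpa using him)
          (by linarith [k.cast_nonneg (α := ℝ)])
        rw [hc] at hk
        exact hk.trans_eq (by ring)
    _ = 4 * ‖h‖ * ‖h - 1‖ * ∑ k ∈ range n, 1 / ((k : ℝ) + c) ^ 2 := by rw [mul_sum]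
    _ ≤ 4 * ‖h‖ * (3 / 2) * (1 / 6) := by
        gcongr
        exact (sum_range_inv_add_sq_le (by linarith) n).trans
          (one_div_le_one_div_of_le (by norm_num) (by linarith))
    _ = ‖h‖ := by ring

lemma tendsto_log_natCast_add_sub_log (s : ℂ) :
    Tendsto (fun n : ℕ => log (n + s) - log n) atTop (𝓝 0) := by
  have hlim : Tendsto (fun n : ℕ => 1 + s / n) atTop (𝓝 1) := by
    simpa using (tendsto_const_div_atTop_nhds_zero_nat s).const_add 1
  have hlog : Tendsto (fun n : ℕ => log (1 + s / n)) atTop (𝓝 0) := by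
    simpa [Function.comp_def] using (continuousAt_clog one_mem_slitPlane).tendsto.comp hlim
  refine hlog.congr' ?_
  filter_upwards [eventually_gt_atTop 0, hlim.eventually_ne one_ne_zero] with n hn hne
  have hn' : (0 : ℝ) < n := Nat.cast_pos.2 hn
  have hsplit : (n : ℂ) + s = ((n : ℝ) : ℂ) * (1 + s / n) := by
    push_cast
    field_simp [Nat.cast_ne_zero.2 hn.ne']
  rw [hsplit, log_ofReal_mul hn' hne]
  push_cast
  ring

lemma GammaSeq_add_div_GammaSeq_mul_exp {s h : ℂ} (hs : ∀ k : ℕ, s + k ≠ 0)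
    (hsh : ∀ k : ℕ, s + k + h ≠ 0) {n : ℕ} (hn : n ≠ 0) :
    GammaSeq (s + h) n / GammaSeq s n * exp (-(h * log s)) =
      exp (∑ k ∈ range (n + 1), logSecantError (s + k) h - h * (log (n + (s + 1)) - log n)) := by
  have hn' : (n : ℂ) ≠ 0 := Nat.cast_ne_zero.2 hn
  have htel : ∑ k ∈ range (n + 1), (log (s + k + 1) - log (s + k)) =
      log (n + (s + 1)) - log s := by
    have := sum_range_sub (fun k : ℕ => log (s + k)) (n + 1)
    push_cast at this
    rw [← add_assoc, add_comm (n : ℂ) s]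
    simpa [add_assoc] using this
  have hexponent : ∑ k ∈ range (n + 1), logSecantError (s + k) h
        - h * (log (n + (s + 1)) - log n) =
      log n * h - h * log s + ∑ k ∈ range (n + 1), (log (s + k) - log (s + k + h)) := by
    simp only [logSecantError]
    rw [sum_sub_distrib, ← mul_sum, htel, sum_sub_distrib, sum_sub_distrib]
    ring
  have hfactor : ∀ k ∈ range (n + 1),
      exp (log (s + k) - log (s + k + h)) = (s + k) / (s + k + h) :=
    fun k _ => by rw [exp_sub, exp_log (hs k), exp_log (hsh k)]
  have hprod : ∀ t : ℂ, (∀ k : ℕ, t + k ≠ 0) → ∏ k ∈ range (n + 1), (t + k) ≠ 0 :=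
    fun t ht => prod_ne_zero_iff.2 fun k _ => ht k
  have hprod_s := hprod s hs
  have hprod_sh := hprod (s + h) fun k => by rw [add_right_comm]; exact hsh k
  have hcpow : (n : ℂ) ^ s ≠ 0 := (cpow_ne_zero_iff (x := (n : ℂ))).2 (Or.inl hn')
  have hfact : (n.factorial : ℂ) ≠ 0 := Nat.cast_ne_zero.2 n.factorial_ne_zero
  have hprod_comm : ∏ k ∈ range (n + 1), (s + h + k) = ∏ k ∈ range (n + 1), (s + k + h) :=
    prod_congr rfl fun k _ => add_right_comm s h k
  rw [hexponent, exp_add, exp_sub, exp_sum, prod_congr rfl hfactor, prod_div_distrib,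
    ← cpow_def_of_ne_zero hn', GammaSeq, GammaSeq, cpow_add _ _ hn', exp_neg, hprod_comm]
  field_simp

theorem norm_Gamma_add_div_Gamma_mul_exp_sub_one_le {s h : ℂ} (hh : ‖h‖ ≤ 1 / 2)
    (him : ‖h‖ < s.im) (hre : 8 ≤ s.re + s.im) :
    ‖Gamma (s + h) / Gamma s * exp (-(h * log s)) - 1‖ ≤ 4 * ‖h‖ := by
  have hs : ∀ k : ℕ, s + k ≠ 0 := fun k hk => by
    have := congrArg im hk
    simp only [add_im, natCast_im, add_zero, zero_im] at this
    linarith [norm_nonneg h]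
  have hsh : ∀ k : ℕ, s + k + h ≠ 0 := fun k hk => by
    have := congrArg im hk
    simp only [add_im, natCast_im, add_zero, zero_im] at this
    linarith [neg_abs_le h.im, abs_im_le_norm h]
  have hΓ : Gamma s ≠ 0 := Gamma_ne_zero fun m hm => hs m (by rw [hm]; ring)
  set E : ℕ → ℂ := fun n =>
    ∑ k ∈ range (n + 1), logSecantError (s + k) h - h * (log (n + (s + 1)) - log n)
  have hlim : Tendsto (fun n => exp (E n)) atTop
      (𝓝 (Gamma (s + h) / Gamma s * exp (-(h * log s)))) := by
    refine (((GammaSeq_tendsto_Gamma _).div (GammaSeq_tendsto_Gamma s) hΓ).mul_const _).congr' ?_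
    filter_upwards [eventually_ne_atTop 0] with n hn
    exact GammaSeq_add_div_GammaSeq_mul_exp hs hsh hn
  have hE : ∀ᶠ n in atTop, ‖E n‖ ≤ 2 * ‖h‖ := by
    filter_upwards [(tendsto_log_natCast_add_sub_log (s + 1)).norm.eventually
      (eventually_le_nhds (show ‖(0 : ℂ)‖ < 1 by simp))] with n hn
    calc ‖E n‖ ≤ ‖∑ k ∈ range (n + 1), logSecantError (s + k) h‖ +
          ‖h‖ * ‖log (n + (s + 1)) - log n‖ := by rw [← norm_mul]; exact norm_sub_le _ _
      _ ≤ ‖h‖ + ‖h‖ * 1 := by gcongr; exact norm_sum_logSecantError_le hh him hre _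
      _ = 2 * ‖h‖ := by ring
  refine le_of_tendsto (hlim.sub_const 1).norm ?_
  filter_upwards [hE] with n hn
  calc ‖exp (E n) - 1‖ ≤ 2 * ‖E n‖ := norm_exp_sub_one_le (by linarith)
    _ ≤ 4 * ‖h‖ := by linarith

theorem tendsto_Gamma_add_div_Gamma_mul_exp {ι : Type*} {l : Filter ι} (σ : ℝ) {t : ι → ℝ}
    {h : ι → ℂ} (ht : Tendsto t l atTop) (hh : Tendsto h l (𝓝 0)) :
    Tendsto (fun j => Gamma (σ + t j * I + h j) / Gamma (σ + t j * I) *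
      exp (-(h j * log (σ + t j * I)))) l (𝓝 1) := by
  rw [tendsto_iff_norm_sub_tendsto_zero]
  refine squeeze_zero_norm' ?_ (by simpa using hh.norm.const_mul 4)
  filter_upwards [hh.norm.eventually (eventually_le_nhds (show ‖(0 : ℂ)‖ < 1 / 2 by norm_num)),
    ht.eventually_gt_atTop (max (1 / 2) (8 - σ))] with j hhj htj
  rw [norm_norm]
  refine norm_Gamma_add_div_Gamma_mul_exp_sub_one_le hhj ?_ ?_ <;>
    simp only [add_re, add_im, ofReal_re, ofReal_im, mul_re, mul_im, I_re, I_im] <;>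
    linarith [le_max_left (1 / 2 : ℝ) (8 - σ), le_max_right (1 / 2 : ℝ) (8 - σ)]

lemma norm_Gamma_add_mul_I_div_sub_exp {s : ℂ} (hs : s ≠ 0) (d : ℝ) {R : ℝ} (hR : 0 < R) :
    ‖Gamma (s + d * I) / Gamma s - exp (d * I * Real.log R)‖ =
      ‖exp (d * I * log (s / R)) * (Gamma (s + d * I) / Gamma s * exp (-(d * I * log s))) - 1‖ := by
  have hR' : (R : ℂ) ≠ 0 := ofReal_ne_zero.2 hR.ne'
  have hlog : log s = Real.log R + log (s / R) := by
    rw [← log_ofReal_mul hR (div_ne_zero hs hR'), mul_div_cancel₀ _ hR']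
  have hphase : ‖exp (d * I * Real.log R)‖ = 1 := by
    simpa [mul_right_comm _ I] using norm_exp_ofReal_mul_I (d * Real.log R)
  set G := Gamma (s + d * I) / Gamma s
  have hfactor : G - exp (d * I * Real.log R) = exp (d * I * Real.log R) *
      (exp (d * I * log (s / R)) * (G * exp (-(d * I * log s))) - 1) := by
    rw [hlog, mul_add, neg_add, exp_add, exp_neg, exp_neg]
    field_simp
  rw [hfactor, norm_mul, hphase, one_mul]

lemma tendsto_ofReal_add_mul_I_div {ι : Type*} {l : Filter ι} (σ : ℝ) {r t : ι → ℝ}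
    (hr : Tendsto r l atTop) (ht : Tendsto (fun j => t j - r j) l (𝓝 0)) :
    Tendsto (fun j => (σ + t j * I) / r j) l (𝓝 I) := by
  have hre : Tendsto (fun j => σ / r j) l (𝓝 0) := tendsto_const_nhds.div_atTop hr
  have him : Tendsto (fun j => (t j - r j) / r j + 1) l (𝓝 1) := by
    simpa using (ht.div_atTop hr).add_const 1
  have hsum := ((continuous_ofReal.tendsto 0).comp hre).add
    (((continuous_ofReal.tendsto 1).comp him).mul_const I)
  simp only [Function.comp_def, ofReal_zero, ofReal_one, zero_add, one_mul] at hsum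
  refine hsum.congr' ?_
  filter_upwards [hr.eventually_gt_atTop 0] with j hj
  have : (r j : ℂ) ≠ 0 := ofReal_ne_zero.2 hj.ne'
  push_cast
  field_simp
  ring

lemma tendsto_zero_of_tendsto_mul_log_div_log_log {ι : Type*} {l : Filter ι} {r ω : ι → ℝ}
    (hr : Tendsto r l atTop)
    (hω : Tendsto (fun j => ω j * Real.log (r j) / Real.log (Real.log (r j))) l (𝓝 0)) :
    Tendsto ω l (𝓝 0) := by
  have hlog : Tendsto (fun j => Real.log (r j)) l atTop := Real.tendsto_log_atTop.comp hr
  have hratio : Tendsto (fun j => Real.log (Real.log (r j)) / Real.log (r j)) l (𝓝 0) :=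
    Real.isLittleO_log_id_atTop.tendsto_div_nhds_zero.comp hlog
  have hprod := hω.mul hratio
  rw [zero_mul] at hprod
  refine hprod.congr' ?_
  filter_upwards [hlog.eventually_gt_atTop 1] with j hj
  have := Real.log_pos hj
  field_simp

theorem gamma_ratio_phase_asymptotic_general
    (σ : ℝ) (r ω r' r'' : ℕ → ℝ)
    (hr : Tendsto r atTop atTop)
    (hω : Tendsto (fun j => ω j * Real.log (r j) / Real.log (Real.log (r j)))
      atTop (𝓝 0))
    (hr' : ∀ j, |r' j - r j| < ω j)
    (hr'' : ∀ j, |r'' j - r j| < ω j) :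
    Tendsto (fun j =>
        Complex.Gamma ((σ : ℂ) + (r' j : ℂ) * Complex.I) /
          Complex.Gamma ((σ : ℂ) + (r'' j : ℂ) * Complex.I) -
        Complex.exp (Complex.I * ((r' j : ℂ) - (r'' j : ℂ)) * (Real.log (r j) : ℂ)))
      atTop (𝓝 0) := by
  have hω0 := tendsto_zero_of_tendsto_mul_log_div_log_log hr hω
  have hdev : ∀ q : ℕ → ℝ, (∀ j, |q j - r j| < ω j) → Tendsto (fun j => q j - r j) atTop (𝓝 0) :=
    fun q hq => squeeze_zero_norm (fun j => (hq j).le) hω0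
  have hd : Tendsto (fun j => ((r' j - r'' j : ℝ) : ℂ) * I) atTop (𝓝 0) := by
    have hdiff : Tendsto (fun j => r' j - r'' j) atTop (𝓝 0) := by
      simpa using (hdev r' hr').sub (hdev r'' hr'')
    simpa using ((continuous_ofReal.tendsto 0).comp hdiff).mul_const I
  have hr''_top : Tendsto r'' atTop atTop := by simpa using hr.atTop_add (hdev r'' hr'')
  have hlim := ((hd.mul ((continuousAt_clog (by simp [mem_slitPlane_iff])).tendsto.comp
    (tendsto_ofReal_add_mul_I_div σ hr (hdev r'' hr'')))).cexp.mul
    (tendsto_Gamma_add_div_Gamma_mul_exp σ hr''_top hd)).sub_const 1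
  rw [zero_mul, exp_zero, one_mul, sub_self] at hlim
  rw [tendsto_zero_iff_norm_tendsto_zero]
  refine (tendsto_zero_iff_norm_tendsto_zero.1 hlim).congr' ?_
  filter_upwards [hr.eventually_gt_atTop 0, hr''_top.eventually_gt_atTop 0] with j hj hj''
  have hs : (σ : ℂ) + r'' j * I ≠ 0 := fun h0 => by simpa [hj''.ne'] using congrArg im h0
  have hshift : (σ : ℂ) + r' j * I = σ + r'' j * I + (r' j - r'' j : ℝ) * I := by push_cast; ring
  rw [hshift, show I * ((r' j : ℂ) - r'' j) = (r' j - r'' j : ℝ) * I by push_cast; ring,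
    norm_Gamma_add_mul_I_div_sub_exp hs _ hj]
  rfl

theorem gamma_ratio_phase_asymptotic
    (σ : ℝ) (r ω r' r'' : ℕ → ℝ)
    (hr : Tendsto r atTop atTop)
    (hωpos : ∀ j, 0 < ω j)
    (hω : Tendsto (fun j => ω j * Real.log (r j) / Real.log (Real.log (r j)))
      atTop (𝓝 0))
    (hr' : ∀ j, |r' j - r j| < ω j)
    (hr'' : ∀ j, |r'' j - r j| < ω j) :
    Tendsto (fun j =>
        Complex.Gamma ((σ : ℂ) + (r' j : ℂ) * Complex.I) /
          Complex.Gamma ((σ : ℂ) + (r'' j : ℂ) * Complex.I) -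
        Complex.exp (Complex.I * ((r' j : ℂ) - (r'' j : ℂ)) * (Real.log (r j) : ℂ)))
      atTop (𝓝 0) :=
  gamma_ratio_phase_asymptotic_general σ r ω r' r'' hr hω hr' hr''
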